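/- arXiv:1508.07594 — 2 statements merged into one kernel-verified Lean document; each statement's English description precedes it below -/
import Mathlib

section
/- Let P ⊆ ℝ^d be a generalized polyhedron. Suppose the indicator function of P equals ∑_{i=1}^k α_i · [D_i] + ∑_{j=1}^m β_j · [C_j] at Lebesgue-almost every point of ℝ^d, where the α_i, β_j are real numbers, each D_i is a line-cone, and each C_j is a simplicial cone. Then every algebraic vertex of P is the apex of at least one of the simplicial cones C_j. -/
/-!
Tangent cones at `v` respect a.e. linear relations between indicators of generalized polyhedra:
along every ray from `v`, membership in a generalized polyhedron is eventually constant and equal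
to membership in its tangent cone, while homotheties centred at `v` preserve null sets. The tangent
cone of a line-cone is a line-cone, and so is the tangent cone at `v` of a simplicial cone with
apex `a ≠ v`: the cone is invariant under homotheties centred at `a`, so its tangent cone at `v` is
invariant under translation along `v - a`. Hence if `v` were not an apex, `[tcone P v]` would be
a.e. a combination of indicators of line-cones.
-/

open MeasureTheory Filter Topology RealInnerProductSpace

noncomputable section

/-- Euclidean space `ℝ^d`. -/
abbrev Euc (d : ℕ) := EuclideanSpace ℝ (Fin d)

/-- A convex polyhedron: an intersection of finitely many closed half-spaces. -/
def IsConvexPolyhedron {d : ℕ} (P : Set (Euc d)) : Prop :=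
  ∃ (n : ℕ) (a : Fin n → Euc d) (b : Fin n → ℝ),
    (∀ i, a i ≠ 0) ∧ P = {x | ∀ i, ⟪a i, x⟫ ≤ b i}

/-- A generalized polyhedron: a finite union of convex polyhedra. -/
def IsGenPolyhedron {d : ℕ} (P : Set (Euc d)) : Prop :=
  ∃ (n : ℕ) (Q : Fin n → Set (Euc d)),
    (∀ i, IsConvexPolyhedron (Q i)) ∧ P = ⋃ i, Q i

/-- A line-cone: a generalized polyhedron invariant under translation by every
multiple of some nonzero vector `u`. -/
def IsLineCone {d : ℕ} (D : Set (Euc d)) : Prop :=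
  IsGenPolyhedron D ∧ ∃ u : Euc d, u ≠ 0 ∧ ∀ t : ℝ, (fun x => x + t • u) '' D = D

/-- The tangent cone of `P` at `v`: points `y = v + x` such that `v + ε • x ∈ P`
for all sufficiently small `ε > 0`. -/
def tcone {d : ℕ} (P : Set (Euc d)) (v : Euc d) : Set (Euc d) :=
  {y | ∃ ε₀ > (0 : ℝ), ∀ ε : ℝ, 0 < ε → ε ≤ ε₀ → v + ε • (y - v) ∈ P}

/-- The real-valued indicator function of a set. -/
def ind {d : ℕ} (S : Set (Euc d)) : Euc d → ℝ := S.indicator fun _ => 1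

/-- `f` agrees Lebesgue-almost everywhere with a finite real linear combination of
indicator functions of line-cones. -/
def IsLinCombOfLineCones {d : ℕ} (f : Euc d → ℝ) : Prop :=
  ∃ (k : ℕ) (α : Fin k → ℝ) (D : Fin k → Set (Euc d)),
    (∀ i, IsLineCone (D i)) ∧ f =ᵐ[volume] fun x => ∑ i, α i * ind (D i) x

/-- `v` is an algebraic vertex of `P`: `v ∈ P` and the indicator function of the
tangent cone of `P` at `v` is not a.e. equal to a finite real linear combination of
indicator functions of line-cones. -/
def IsAlgebraicVertex {d : ℕ} (P : Set (Euc d)) (v : Euc d) : Prop :=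
  v ∈ P ∧ ¬ IsLinCombOfLineCones (ind (tcone P v))

/-- A simplicial cone with apex `a` generated by `d` linearly independent vectors. -/
def IsSimplicialCone {d : ℕ} (C : Set (Euc d)) (a : Euc d) : Prop :=
  ∃ w : Fin d → Euc d, LinearIndependent ℝ w ∧
    C = {x | ∃ t : Fin d → ℝ, (∀ j, 0 ≤ t j) ∧ x = a + ∑ j, t j • w j}

section

variable {d : ℕ}

lemma isConvexPolyhedron_setOf_inner_le {ι : Type*} [Finite ι] {a : ι → Euc d}
    (ha : ∀ i, a i ≠ 0) (b : ι → ℝ) :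
    IsConvexPolyhedron {x : Euc d | ∀ i, ⟪a i, x⟫ ≤ b i} := by
  let e := Finite.equivFin ι
  refine ⟨Nat.card ι, a ∘ e.symm, b ∘ e.symm, fun j => ha _, ?_⟩
  ext x
  exact e.symm.forall_congr_right.symm

lemma isConvexPolyhedron_setOf_le {ι : Type*} [Finite ι] {φ : ι → Euc d →ₗ[ℝ] ℝ}
    (hφ : ∀ i, φ i ≠ 0) (b : ι → ℝ) :
    IsConvexPolyhedron {x : Euc d | ∀ i, φ i x ≤ b i} := by
  let r i := (InnerProductSpace.toDual ℝ (Euc d)).symm (φ i).toContinuousLinearMap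
  have hr : ∀ i x, ⟪r i, x⟫ = φ i x := fun i x => InnerProductSpace.toDual_symm_apply
  simp only [← hr]
  refine isConvexPolyhedron_setOf_inner_le (fun i hi => hφ i ?_) b
  ext x
  rw [← hr, hi, inner_zero_left, LinearMap.zero_apply]

lemma IsConvexPolyhedron.isGenPolyhedron {Q : Set (Euc d)} (h : IsConvexPolyhedron Q) :
    IsGenPolyhedron Q :=
  ⟨1, fun _ => Q, fun _ => h, (Set.iUnion_const Q).symm⟩

lemma isGenPolyhedron_empty : IsGenPolyhedron (∅ : Set (Euc d)) :=
  ⟨0, Fin.elim0, Fin.rec0, by simp⟩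

lemma isGenPolyhedron_iUnion {ι : Type*} [Finite ι] {Q : ι → Set (Euc d)}
    (hQ : ∀ i, IsGenPolyhedron (Q i)) : IsGenPolyhedron (⋃ i, Q i) := by
  choose n R hR hQR using hQ
  let e := Finite.equivFin (Σ i, Fin (n i))
  refine ⟨_, fun j => R (e.symm j).1 (e.symm j).2, fun j => hR _ _, ?_⟩
  simp only [hQR, Set.iUnion_sigma', e.symm.surjective.iUnion_comp (fun p => R p.1 p.2)]

lemma IsConvexPolyhedron.isClosed {Q : Set (Euc d)} (hQ : IsConvexPolyhedron Q) :
    IsClosed Q := by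
  obtain ⟨n, a, b, -, rfl⟩ := hQ
  simp only [Set.ofPred_forall]
  exact isClosed_iInter fun i => isClosed_le (by fun_prop) continuous_const

lemma tendsto_add_mul_nhdsGT (l c : ℝ) :
    Tendsto (fun ε : ℝ => l + ε * c) (𝓝[>] 0) (𝓝 l) := by
  have : Continuous fun ε : ℝ => l + ε * c := by fun_prop
  simpa using (this.tendsto 0).mono_left nhdsWithin_le_nhds

lemma eventually_add_mul_le_iff_of_le {l b : ℝ} (h : l ≤ b) (c : ℝ) :
    ∀ᶠ ε in 𝓝[>] (0 : ℝ), (l + ε * c ≤ b ↔ (l = b → c ≤ 0)) := by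
  rcases h.lt_or_eq with h | rfl
  · filter_upwards [(tendsto_add_mul_nhdsGT l c).eventually_le_const h] with ε hε
    simp [hε, h.ne]
  · filter_upwards [self_mem_nhdsWithin] with ε (hε : 0 < ε)
    simpa using mul_le_mul_iff_right₀ (b := c) (c := 0) hε

lemma eventually_add_smul_notMem_of_isClosed {E : Type*} [NormedAddCommGroup E]
    [NormedSpace ℝ E] {Q : Set E} (hQ : IsClosed Q) {v : E} (hv : v ∉ Q) (y : E) :
    ∀ᶠ ε in 𝓝[>] (0 : ℝ), v + ε • y ∉ Q := by
  have : Tendsto (fun ε : ℝ => v + ε • y) (𝓝[>] 0) (𝓝 v) := by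
    have : Continuous fun ε : ℝ => v + ε • y := by fun_prop
    simpa using (this.tendsto 0).mono_left nhdsWithin_le_nhds
  exact this.eventually (hQ.isOpen_compl.mem_nhds hv)

lemma eventually_add_smul_mem_setOf_inner_le_iff {ι : Type*} [Finite ι] {a : ι → Euc d}
    {b : ι → ℝ} {v : Euc d} (hv : v ∈ {x : Euc d | ∀ i, ⟪a i, x⟫ ≤ b i}) (y : Euc d) :
    ∀ᶠ ε in 𝓝[>] (0 : ℝ), (v + ε • y ∈ {x : Euc d | ∀ i, ⟪a i, x⟫ ≤ b i} ↔
      ∀ i, ⟪a i, v⟫ = b i → ⟪a i, y⟫ ≤ 0) := by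
  filter_upwards [eventually_all.2 fun i => eventually_add_mul_le_iff_of_le (hv i) ⟪a i, y⟫]
    with ε hε
  simp only [inner_add_right, real_inner_smul_right]
  exact forall_congr' hε

lemma mem_tcone_iff_eventually {Q : Set (Euc d)} {v x : Euc d} :
    x ∈ tcone Q v ↔ ∀ᶠ ε in 𝓝[>] (0 : ℝ), v + ε • (x - v) ∈ Q := by
  constructor
  · rintro ⟨ε₀, hε₀, h⟩
    filter_upwards [Ioc_mem_nhdsGT_of_mem ⟨le_rfl, hε₀⟩] with ε hε
    exact h ε hε.1 hε.2
  · intro h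
    obtain ⟨ε₀, hε₀, hsub⟩ := mem_nhdsGT_iff_exists_Ioc_subset.1 h
    exact ⟨ε₀, hε₀, fun ε h₁ h₂ => hsub ⟨h₁, h₂⟩⟩

lemma eventually_mem_iff_mem_tcone_of_eventually_iff {Q : Set (Euc d)} {v x : Euc d} {p : Prop}
    (h : ∀ᶠ ε in 𝓝[>] (0 : ℝ), (v + ε • (x - v) ∈ Q ↔ p)) :
    ∀ᶠ ε in 𝓝[>] (0 : ℝ), (v + ε • (x - v) ∈ Q ↔ x ∈ tcone Q v) := by
  have hp : x ∈ tcone Q v ↔ p := by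
    rw [mem_tcone_iff_eventually, eventually_congr h, eventually_const]
  exact h.mono fun ε hε => hε.trans hp.symm

lemma IsConvexPolyhedron.exists_eventually_add_smul_mem_iff {Q : Set (Euc d)}
    (hQ : IsConvexPolyhedron Q) (v y : Euc d) :
    ∃ p : Prop, ∀ᶠ ε in 𝓝[>] (0 : ℝ), (v + ε • y ∈ Q ↔ p) := by
  by_cases hv : v ∈ Q
  · obtain ⟨n, a, b, -, rfl⟩ := hQ
    exact ⟨_, eventually_add_smul_mem_setOf_inner_le_iff hv y⟩
  · exact ⟨False, (eventually_add_smul_notMem_of_isClosed hQ.isClosed hv y).mono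
      fun ε hε => iff_false_intro hε⟩

lemma IsGenPolyhedron.exists_eventually_add_smul_mem_iff {Q : Set (Euc d)}
    (hQ : IsGenPolyhedron Q) (v y : Euc d) :
    ∃ p : Prop, ∀ᶠ ε in 𝓝[>] (0 : ℝ), (v + ε • y ∈ Q ↔ p) := by
  obtain ⟨n, R, hR, rfl⟩ := hQ
  choose p hp using fun i => (hR i).exists_eventually_add_smul_mem_iff v y
  exact ⟨∃ i, p i, (eventually_all.2 hp).mono fun ε hε =>
    Set.mem_iUnion.trans (exists_congr hε)⟩

lemma IsGenPolyhedron.eventually_add_smul_mem_iff_mem_tcone {Q : Set (Euc d)}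
    (hQ : IsGenPolyhedron Q) (v x : Euc d) :
    ∀ᶠ ε in 𝓝[>] (0 : ℝ), (v + ε • (x - v) ∈ Q ↔ x ∈ tcone Q v) :=
  have ⟨_, hp⟩ := hQ.exists_eventually_add_smul_mem_iff v (x - v)
  eventually_mem_iff_mem_tcone_of_eventually_iff hp

lemma IsGenPolyhedron.eventually_ind_eq_ind_tcone {Q : Set (Euc d)}
    (hQ : IsGenPolyhedron Q) (v x : Euc d) :
    ∀ᶠ ε in 𝓝[>] (0 : ℝ), ind Q (v + ε • (x - v)) = ind (tcone Q v) x :=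
  (hQ.eventually_add_smul_mem_iff_mem_tcone v x).mono fun _ hε => by
    classical exact if_congr hε rfl rfl

lemma tcone_eq_empty_of_isClosed_of_notMem {Q : Set (Euc d)} (hQ : IsClosed Q) {v : Euc d}
    (hv : v ∉ Q) : tcone Q v = ∅ :=
  Set.eq_empty_of_forall_notMem fun x hx =>
    have ⟨_, hmem, hnotMem⟩ := ((mem_tcone_iff_eventually.1 hx).and
      (eventually_add_smul_notMem_of_isClosed hQ hv (x - v))).exists
    hnotMem hmem

lemma tcone_setOf_inner_le_of_mem {ι : Type*} [Finite ι] {a : ι → Euc d} {b : ι → ℝ} {v : Euc d}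
    (hv : v ∈ {x : Euc d | ∀ i, ⟪a i, x⟫ ≤ b i}) :
    tcone {x : Euc d | ∀ i, ⟪a i, x⟫ ≤ b i} v =
      {y | ∀ i : {i // ⟪a i, v⟫ = b i}, ⟪a i, y⟫ ≤ ⟪a i, v⟫} := by
  ext y
  rw [mem_tcone_iff_eventually,
    eventually_congr (eventually_add_smul_mem_setOf_inner_le_iff hv _), eventually_const]
  simp [inner_sub_right]

lemma IsConvexPolyhedron.isGenPolyhedron_tcone {Q : Set (Euc d)} (hQ : IsConvexPolyhedron Q)
    (v : Euc d) : IsGenPolyhedron (tcone Q v) := by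
  by_cases hv : v ∈ Q
  · obtain ⟨n, a, b, ha, rfl⟩ := hQ
    rw [tcone_setOf_inner_le_of_mem hv]
    exact (isConvexPolyhedron_setOf_inner_le (a := fun i : {i // ⟪a i, v⟫ = b i} => a i)
      (fun i => ha i) _).isGenPolyhedron
  · rw [tcone_eq_empty_of_isClosed_of_notMem hQ.isClosed hv]
    exact isGenPolyhedron_empty

lemma tcone_iUnion {ι : Type*} [Finite ι] {Q : ι → Set (Euc d)}
    (hQ : ∀ i, IsGenPolyhedron (Q i)) (v : Euc d) :
    tcone (⋃ i, Q i) v = ⋃ i, tcone (Q i) v := by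
  ext x
  have hx := eventually_all.2 fun i => (hQ i).eventually_add_smul_mem_iff_mem_tcone v x
  rw [Set.mem_iUnion, mem_tcone_iff_eventually, eventually_congr
    (hx.mono fun ε hε => Set.mem_iUnion.trans (exists_congr hε)), eventually_const]

lemma IsGenPolyhedron.tcone {Q : Set (Euc d)} (hQ : IsGenPolyhedron Q) (v : Euc d) :
    IsGenPolyhedron (tcone Q v) := by
  obtain ⟨n, R, hR, rfl⟩ := hQ
  rw [tcone_iUnion fun i => (hR i).isGenPolyhedron]
  exact isGenPolyhedron_iUnion fun i => (hR i).isGenPolyhedron_tcone v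

lemma image_add_smul_eq_of_forall_add_smul_mem {E : Type*} [AddCommGroup E] [Module ℝ E]
    {S : Set E} {u : E} (h : ∀ t : ℝ, ∀ x ∈ S, x + t • u ∈ S) (t : ℝ) :
    (fun x => x + t • u) '' S = S :=
  (Set.image_subset_iff.2 fun x hx => h t x hx).antisymm fun x hx =>
    ⟨x + (-t) • u, h _ _ hx, by module⟩

lemma add_smul_mem_of_image_add_smul_eq {E : Type*} [AddCommGroup E] [Module ℝ E] {S : Set E}
    {u : E} {t : ℝ} (h : (fun x => x + t • u) '' S = S) {x : E} (hx : x ∈ S) : x + t • u ∈ S :=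
  h ▸ Set.mem_image_of_mem _ hx

lemma add_smul_mem_tcone {Q : Set (Euc d)} {u : Euc d} (h : ∀ t : ℝ, ∀ x ∈ Q, x + t • u ∈ Q)
    (v : Euc d) (t : ℝ) : ∀ y ∈ tcone Q v, y + t • u ∈ tcone Q v := by
  intro y hy
  rw [mem_tcone_iff_eventually] at hy ⊢
  filter_upwards [hy] with ε hε
  convert h (ε * t) _ hε using 1
  rw [mul_smul]
  module

lemma add_smul_sub_mem_tcone_of_homothety_mem {C : Set (Euc d)} {a : Euc d}
    (hC : ∀ r : ℝ, 0 < r → ∀ x ∈ C, a + r • (x - a) ∈ C) (v : Euc d) (t : ℝ) :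
    ∀ y ∈ tcone C v, y + t • (v - a) ∈ tcone C v := by
  intro y hy
  rw [mem_tcone_iff_eventually] at hy ⊢
  have hpos : ∀ᶠ ε in 𝓝[>] (0 : ℝ), 0 < 1 + ε * t :=
    (tendsto_add_mul_nhdsGT 1 t).eventually_const_lt one_pos
  have hg : Tendsto (fun ε : ℝ => ε / (1 + ε * t)) (𝓝[>] 0) (𝓝[>] 0) := by
    refine tendsto_nhdsWithin_iff.2 ⟨?_, ?_⟩
    · have : ContinuousAt (fun ε : ℝ => ε / (1 + ε * t)) 0 := by fun_prop (disch := simp)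
      simpa using this.tendsto.mono_left nhdsWithin_le_nhds
    · filter_upwards [self_mem_nhdsWithin, hpos] with ε (hε : 0 < ε) h1 using div_pos hε h1
  -- `v + ε • (y + t • (v - a) - v)` is the image of `v + (ε / (1 + ε * t)) • (y - v)` under the
  -- homothety of ratio `1 + ε * t` centred at `a`.
  filter_upwards [hg.eventually hy, hpos] with ε hε h1
  have hscale : (1 + ε * t) • (v + (ε / (1 + ε * t)) • (y - v) - a) =
      (1 + ε * t) • (v - a) + ε • (y - v) := by
    rw [add_sub_right_comm, smul_add, smul_smul, mul_div_cancel₀ _ h1.ne']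
  convert hC _ h1 _ hε using 1
  rw [hscale]
  module

lemma IsLineCone.tcone {D : Set (Euc d)} (hD : IsLineCone D) (v : Euc d) :
    IsLineCone (tcone D v) := by
  obtain ⟨hgen, u, hu, hinv⟩ := hD
  exact ⟨hgen.tcone v, u, hu, image_add_smul_eq_of_forall_add_smul_mem <|
    add_smul_mem_tcone (fun t _ => add_smul_mem_of_image_add_smul_eq (hinv t)) v⟩

lemma IsSimplicialCone.exists_eq_setOf_le {C : Set (Euc d)} {a : Euc d}
    (hC : IsSimplicialCone C a) :
    ∃ φ : Fin d → Euc d →ₗ[ℝ] ℝ, (∀ j, φ j ≠ 0) ∧ C = {x | ∀ j, φ j x ≤ φ j a} := by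
  obtain ⟨w, hw, rfl⟩ := hC
  let B : Module.Basis (Fin d) ℝ (Euc d) :=
    Module.Basis.mk hw (hw.span_eq_top_of_card_eq_finrank' (by simp)).ge
  have hB : ∀ t : Fin d → ℝ, ∑ j, t j • w j = ∑ j, t j • B j := by simp [B]
  refine ⟨fun j => -B.coord j, fun j h => by simpa using LinearMap.congr_fun h (B j), ?_⟩
  ext x
  simp only [Set.mem_ofPred_eq, LinearMap.neg_apply, neg_le_neg_iff]
  constructor
  · rintro ⟨t, ht, rfl⟩ j
    simpa [hB, Finsupp.single_apply] using ht j
  · intro hx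
    refine ⟨fun j => B.coord j (x - a), fun j => by simpa using hx j, ?_⟩
    rw [hB]
    simp only [Module.Basis.coord_apply, B.sum_repr]
    abel

lemma IsSimplicialCone.isConvexPolyhedron {C : Set (Euc d)} {a : Euc d}
    (hC : IsSimplicialCone C a) : IsConvexPolyhedron C := by
  obtain ⟨φ, hφ, rfl⟩ := hC.exists_eq_setOf_le
  exact isConvexPolyhedron_setOf_le hφ _

lemma IsSimplicialCone.homothety_mem {C : Set (Euc d)} {a : Euc d} (hC : IsSimplicialCone C a)
    {r : ℝ} (hr : 0 < r) {x : Euc d} (hx : x ∈ C) : a + r • (x - a) ∈ C := by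
  obtain ⟨φ, -, rfl⟩ := hC.exists_eq_setOf_le
  intro j
  have hxj := hx j
  simp only [map_add, map_smul, map_sub, smul_eq_mul]
  nlinarith

lemma IsSimplicialCone.isLineCone_tcone {C : Set (Euc d)} {a v : Euc d}
    (hC : IsSimplicialCone C a) (hv : a ≠ v) : IsLineCone (tcone C v) :=
  ⟨hC.isConvexPolyhedron.isGenPolyhedron.tcone v, v - a, sub_ne_zero.2 hv.symm,
    image_add_smul_eq_of_forall_add_smul_mem <|
      add_smul_sub_mem_tcone_of_homothety_mem (fun _ hr _ hx => hC.homothety_mem hr hx) v⟩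

lemma ae_eq_comp_homothety {E F : Type*} [NormedAddCommGroup E] [NormedSpace ℝ E]
    [MeasurableSpace E] [BorelSpace E] [FiniteDimensional ℝ E] (μ : Measure E)
    [μ.IsAddHaarMeasure] {f g : E → F} (h : f =ᵐ[μ] g) (v : E) {c : ℝ} (hc : c ≠ 0) :
    (fun x => f (v + c • (x - v))) =ᵐ[μ] fun x => g (v + c • (x - v)) := by
  have hhom : (fun x : E => v + c • (x - v)) = (fun y => (v - c • v) + y) ∘ (c • ·) := by
    ext x
    simp only [Function.comp_apply, smul_sub]
    abel
  have hqmp : Measure.QuasiMeasurePreserving (fun x : E => v + c • (x - v)) μ μ := by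
    rw [hhom]
    exact (measurePreserving_add_left μ _).quasiMeasurePreserving.comp
      (Measure.quasiMeasurePreserving_smul μ hc)
  exact hqmp.ae_eq_comp h

lemma ind_tcone_ae_eq_sum {ι : Type*} [Fintype ι] {P : Set (Euc d)} {Q : ι → Set (Euc d)}
    (hP : IsGenPolyhedron P) (hQ : ∀ i, IsGenPolyhedron (Q i)) {c : ι → ℝ}
    (h : ind P =ᵐ[volume] fun x => ∑ i, c i * ind (Q i) x) (v : Euc d) :
    ind (tcone P v) =ᵐ[volume] fun x => ∑ i, c i * ind (tcone (Q i) v) x := by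
  have hseq : Tendsto (fun n : ℕ => 1 / ((n : ℝ) + 1)) atTop (𝓝[>] 0) :=
    tendsto_nhdsWithin_of_tendsto_nhds_of_eventually_within _
      tendsto_one_div_add_atTop_nhds_zero_nat
      (Eventually.of_forall fun _ => Set.mem_Ioi.2 Nat.one_div_pos_of_nat)
  have hrays : ∀ᵐ x, ∀ n : ℕ, ind P (v + (1 / ((n : ℝ) + 1)) • (x - v)) =
      ∑ i, c i * ind (Q i) (v + (1 / ((n : ℝ) + 1)) • (x - v)) :=
    ae_all_iff.2 fun n => ae_eq_comp_homothety volume h v (by positivity)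
  filter_upwards [hrays] with x hx
  obtain ⟨n, hPn, hQn⟩ := (hseq.eventually ((hP.eventually_ind_eq_ind_tcone v x).and
    (eventually_all.2 fun i => (hQ i).eventually_ind_eq_ind_tcone v x))).exists
  rw [← hPn, hx n]
  simp only [hQn]

lemma isLinCombOfLineCones_of_fintype {ι : Type*} [Fintype ι] {f : Euc d → ℝ} {c : ι → ℝ}
    {D : ι → Set (Euc d)} (hD : ∀ i, IsLineCone (D i))
    (h : f =ᵐ[volume] fun x => ∑ i, c i * ind (D i) x) : IsLinCombOfLineCones f := by
  let e := (Fintype.equivFin ι).symm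
  refine ⟨Fintype.card ι, c ∘ e, D ∘ e, fun j => hD _, h.trans (Eventually.of_forall fun x => ?_)⟩
  exact (e.sum_comp fun i => c i * ind (D i) x).symm

end

/-- If the indicator function of a generalized polyhedron `P` is a.e.
equal to a real linear combination of indicator functions of line-cones and simplicial
cones, then every algebraic vertex of `P` is the apex of one of the simplicial cones. -/
theorem statement_3 {d : ℕ} (P : Set (Euc d)) (hP : IsGenPolyhedron P)
    (k m : ℕ) (α : Fin k → ℝ) (β : Fin m → ℝ)
    (D : Fin k → Set (Euc d)) (C : Fin m → Set (Euc d)) (a : Fin m → Euc d)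
    (hD : ∀ i, IsLineCone (D i)) (hC : ∀ j, IsSimplicialCone (C j) (a j))
    (heq : ind P =ᵐ[volume] fun x =>
      (∑ i, α i * ind (D i) x) + ∑ j, β j * ind (C j) x)
    (v : Euc d) (hv : IsAlgebraicVertex P v) :
    ∃ j, a j = v := by
  by_contra! hapex
  have hgen : ∀ l, IsGenPolyhedron (Sum.elim D C l) := by
    rintro (i | j)
    exacts [(hD i).1, (hC j).isConvexPolyhedron.isGenPolyhedron]
  have hsum : ind P =ᵐ[volume] fun x => ∑ l, Sum.elim α β l * ind (Sum.elim D C l) x := by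
    simpa only [Fintype.sum_sum_type, Sum.elim_inl, Sum.elim_inr] using heq
  refine hv.2 (isLinCombOfLineCones_of_fintype ?_ (ind_tcone_ae_eq_sum hP hgen hsum v))
  rintro (i | j)
  exacts [(hD i).tcone v, (hC j).isLineCone_tcone (hapex j)]
end
end

section
/- Let v_1, …, v_n be distinct points of ℝ^d. For each i let F_i be a finite real linear combination of functions of the form z ↦ c / ∏_{j=1}^d ⟨w_j, z⟩ with c ∈ ℝ and w_1, …, w_d nonzero vectors in ℝ^d. If ∑_{i=1}^n e^{⟨v_i, z⟩} · F_i(z) = 0 for every z ∈ ℝ^d at which all the functions F_1, …, F_n are defined (this is a dense open set), then each F_i vanishes identically on its domain of definition. -/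
open MeasureTheory Filter Topology RealInnerProductSpace

noncomputable section

/-!
Each `F_i` is homogeneous of degree `-d`, so restricting the identity to a ray `t • z` with
`t ≠ 0` turns it into `t⁻ᵈ ∑ᵢ F_i(z) e^{t⟪v_i, z⟫} = 0`. When the frequencies `⟪v_i, z⟫` are
distinct, the exponentials `t ↦ e^{a t}` (characters of `(ℝ, +)`) are linearly independent, so
every `F_i(z)` vanishes. Such `z` are dense, being the complement of finitely many hyperplanes,
and each `F_i` is continuous on its domain.
-/

open Set Finset Function

def expMulHom (a : ℝ) : Multiplicative ℝ →* ℝ where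
  toFun t := Real.exp (a * t.toAdd)
  map_one' := by simp
  map_mul' x y := by simp [mul_add, Real.exp_add]

theorem Real.linearIndependent_exp_mul {ι : Type*} {a : ι → ℝ} (ha : Injective a) :
    LinearIndependent ℝ fun i (t : ℝ) => Real.exp (a i * t) := by
  have hχ : Injective expMulHom := fun a a' h => by
    simpa [expMulHom] using DFunLike.congr_fun h (Multiplicative.ofAdd 1)
  exact (linearIndependent_monoidHom (Multiplicative ℝ) ℝ).comp _ (hχ.comp ha)

theorem Real.eq_zero_of_sum_mul_exp_mul_eq_zero {ι : Type*} [Fintype ι] {a : ι → ℝ}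
    (ha : Injective a) {b : ι → ℝ}
    (h : ∀ t : ℝ, t ≠ 0 → ∑ i, b i * Real.exp (a i * t) = 0) (i : ι) : b i = 0 := by
  have h' : (fun t => ∑ i, b i * Real.exp (a i * t)) = fun _ => 0 :=
    Continuous.ext_on (dense_compl_singleton 0) (by fun_prop) continuous_const h
  refine Fintype.linearIndependent_iff.mp (Real.linearIndependent_exp_mul ha) b ?_ i
  ext t
  simpa using congrFun h' t

variable {E : Type*} [NormedAddCommGroup E] [InnerProductSpace ℝ E]

theorem dense_setOf_inner_ne_zero {u : E} (hu : u ≠ 0) : Dense {z : E | ⟪u, z⟫ ≠ 0} := by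
  refine interior_eq_empty_iff_dense_compl.1 (not_nonempty_iff_eq_empty.1 fun hint => hu ?_)
  have hker := (LinearMap.ker (innerₛₗ ℝ u)).eq_top_of_nonempty_interior' hint
  simpa using LinearMap.congr_fun (LinearMap.ker_eq_top.mp hker) u

theorem dense_setOf_forall_inner_ne_zero {ι : Type*} [Finite ι] {u : ι → E}
    (hu : ∀ i, u i ≠ 0) : Dense {z : E | ∀ i, ⟪u i, z⟫ ≠ 0} := by
  have hrange := (finite_range fun i => {z : E | ⟪u i, z⟫ ≠ 0}).dense_sInter
    (forall_mem_range.2 fun i => isOpen_ne_fun (by fun_prop) continuous_const)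
    (forall_mem_range.2 fun i => dense_setOf_inner_ne_zero (hu i))
  simpa only [sInter_range, ← ofPred_forall] using hrange

theorem dense_setOf_injective_inner_and_forall_inner_ne_zero {ι κ : Type*} [Finite ι] [Finite κ]
    {v : ι → E} (hv : Injective v) {u : κ → E} (hu : ∀ k, u k ≠ 0) :
    Dense {z : E | Injective (fun i => ⟪v i, z⟫) ∧ ∀ k, ⟪u k, z⟫ ≠ 0} := by
  let diff : {p : ι × ι // p.1 ≠ p.2} → E := fun p => v p.1.1 - v p.1.2
  refine (dense_setOf_forall_inner_ne_zero (u := Sum.elim diff u) ?_).mono fun z hz => ⟨?_, ?_⟩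
  · rintro (p | k)
    · exact sub_ne_zero_of_ne (hv.ne p.2)
    · exact hu k
  · intro i i' h
    by_contra hne
    exact hz (.inl ⟨(i, i'), hne⟩) (by simp [diff, inner_sub_left, h])
  · exact fun k => hz (.inr k)

section SumDivProdInner

variable {α β : Type*} [Fintype α] [Fintype β]

def sumDivProdInner (c : α → ℝ) (w : α → β → E) (z : E) : ℝ :=
  ∑ k, c k / ∏ j, ⟪w k j, z⟫

theorem sumDivProdInner_smul (c : α → ℝ) (w : α → β → E) (t : ℝ) (z : E) :
    sumDivProdInner c w (t • z) = (t ^ Fintype.card β)⁻¹ * sumDivProdInner c w z := by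
  simp only [sumDivProdInner, real_inner_smul_right, prod_mul_distrib, prod_const, card_univ,
    mul_sum, div_eq_mul_inv, mul_inv]
  exact sum_congr rfl fun k _ => by ring

theorem continuousAt_sumDivProdInner (c : α → ℝ) (w : α → β → E) {z : E}
    (hz : ∀ k j, ⟪w k j, z⟫ ≠ 0) : ContinuousAt (sumDivProdInner c w) z := by
  unfold sumDivProdInner
  exact tendsto_finsetSum _ fun k _ => continuousAt_const.div (by fun_prop)
    (prod_ne_zero_iff.mpr fun j _ => hz k j)

end SumDivProdInner

theorem eq_zero_of_sum_exp_inner_smul_mul_eq_zero {ι : Type*} [Fintype ι] {v : ι → E}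
    {F : ι → E → ℝ} {n : ℕ} (hF : ∀ i (t : ℝ) z, F i (t • z) = (t ^ n)⁻¹ * F i z) {z : E}
    (hz : Injective fun i => ⟪v i, z⟫)
    (h : ∀ t : ℝ, t ≠ 0 → ∑ i, Real.exp ⟪v i, t • z⟫ * F i (t • z) = 0) (i : ι) :
    F i z = 0 := by
  refine Real.eq_zero_of_sum_mul_exp_mul_eq_zero hz (b := fun i => F i z) (fun t ht => ?_) i
  calc ∑ i, F i z * Real.exp (⟪v i, z⟫ * t)
      = t ^ n * ∑ i, Real.exp ⟪v i, t • z⟫ * F i (t • z) := by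
        simp only [hF, real_inner_smul_right, mul_sum]
        refine sum_congr rfl fun i _ => ?_
        field_simp
    _ = 0 := by rw [h t ht, mul_zero]

/-- If a sum of exponentials with distinct frequencies times rational
functions of the given form vanishes wherever all the rational functions are defined,
then each rational function vanishes identically on its domain. -/
theorem statement_15 {d : ℕ} (N : ℕ) (v : Fin N → Euc d) (hv : Function.Injective v)
    (m : Fin N → ℕ) (c : ∀ i, Fin (m i) → ℝ) (w : ∀ i, Fin (m i) → Fin d → Euc d)
    (hw : ∀ i k j, w i k j ≠ 0)
    (h0 : ∀ z : Euc d, (∀ i k j, ⟪w i k j, z⟫ ≠ 0) →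
      ∑ i, Real.exp ⟪v i, z⟫ * (∑ k, c i k / ∏ j, ⟪w i k j, z⟫) = 0) :
    ∀ i, ∀ z : Euc d, (∀ k j, ⟪w i k j, z⟫ ≠ 0) →
      ∑ k, c i k / ∏ j, ⟪w i k j, z⟫ = 0 := by
  let F i := sumDivProdInner (c i) (w i)
  let G := {z : Euc d | Injective (fun i => ⟪v i, z⟫) ∧
    ∀ x : Σ i, Fin (m i) × Fin d, ⟪w x.1 x.2.1 x.2.2, z⟫ ≠ 0}
  have hG : Dense G :=
    dense_setOf_injective_inner_and_forall_inner_ne_zero hv fun x => hw x.1 x.2.1 x.2.2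
  have hFG : ∀ z ∈ G, ∀ i, F i z = 0 := by
    rintro z ⟨hinj, hzw⟩
    refine eq_zero_of_sum_exp_inner_smul_mul_eq_zero (fun i => sumDivProdInner_smul (c i) (w i))
      hinj fun t ht => h0 _ fun i k j => ?_
    rw [real_inner_smul_right]
    exact mul_ne_zero ht (hzw ⟨i, k, j⟩)
  intro i z hz
  have himage : F i '' G ⊆ {0} := Set.image_subset_iff.2 fun y hy => hFG y hy i
  exact closure_minimal himage isClosed_singleton
    (mem_closure_image (continuousAt_sumDivProdInner (c i) (w i) hz) (hG z))
end
end
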